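/- With sin_q(z) = sum_{n≥0} (-1)^n q^n z^(2n+1)/[2n+1]_q! and cos_q(z) = sum_{n≥0} (-1)^n q^n z^(2n)/[2n]_q! as formal power series over Q(q), one has sin_q(z)·sin_{1/q}(z) + cos_q(z)·cos_{1/q}(z) = 1. -/

import Mathlib

/-!
Using `[j]_{1/q}! = q^(-C(j,2)) [j]_q!`, the coefficient of `z^m` on the left vanishes for odd
`m` by parity and, for `m = 2N`, equals `(-1)^N q^N S_m(q⁻¹)`, where the Gauss sum
`S_m(t) = ∑_{i+j=m} (-1)^j q^(C(j,2)) t^j / ([i]_q! [j]_q!)` satisfies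
`[m+1]_q S_{m+1}(t) = (1 - t q^m) S_m(t)`, so `S_m(t) = ∏_{k<m} (1 - t q^k) / [m]_q!`; at
`t = q⁻¹` the factor `k = 1` vanishes, hence so does every coefficient of degree `m ≥ 2`.
-/

noncomputable section
open Finset PowerSeries

abbrev Fq : Type := RatFunc ℚ

/-- The variable `q` as element of the field of rational functions `ℚ(q)`. -/
def qv : Fq := RatFunc.X

/-- The q-integer `[m]_q = 1 + q + ... + q^(m-1)`. -/
def qInt (x : Fq) (m : ℕ) : Fq := ∑ i ∈ Finset.range m, x ^ i

/-- The q-factorial `[m]_q! = [1]_q [2]_q ⋯ [m]_q`. -/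
def qFact (x : Fq) (m : ℕ) : Fq := ∏ i ∈ Finset.range m, qInt x (i + 1)

/-- `sin_q(z) = ∑ (-1)^n q^n z^(2n+1)/[2n+1]_q!`. -/
def qsin (x : Fq) : PowerSeries Fq :=
  PowerSeries.mk fun m =>
    if m % 2 = 1 then (-1 : Fq) ^ (m / 2) * x ^ (m / 2) / qFact x m else 0

/-- `cos_q(z) = ∑ (-1)^n q^n z^(2n)/[2n]_q!`. -/
def qcos (x : Fq) : PowerSeries Fq :=
  PowerSeries.mk fun m =>
    if m % 2 = 0 then (-1 : Fq) ^ (m / 2) * x ^ (m / 2) / qFact x m else 0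

section QAnalogues

variable (x : Fq)

lemma qInt_add (a b : ℕ) : qInt x (a + b) = qInt x a + x ^ a * qInt x b := by
  simp only [qInt, sum_range_add, mul_sum, pow_add]

lemma qFact_succ (n : ℕ) : qFact x (n + 1) = qFact x n * qInt x (n + 1) :=
  prod_range_succ _ n

lemma qFact_ne_zero (hx : ∀ n, qInt x (n + 1) ≠ 0) (n : ℕ) : qFact x n ≠ 0 :=
  prod_ne_zero_iff.mpr fun i _ => hx i

variable {x}

lemma pow_mul_qInt_inv (hx : x ≠ 0) (n : ℕ) : x ^ n * qInt x⁻¹ (n + 1) = qInt x (n + 1) := by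
  rw [qInt, qInt, mul_sum, ← sum_range_reflect]
  refine sum_congr rfl fun i hi => ?_
  rw [mem_range] at hi
  rw [inv_pow, ← pow_sub₀ x hx (by omega)]
  congr 1
  omega

lemma pow_choose_two_mul_qFact_inv (hx : x ≠ 0) (n : ℕ) :
    x ^ n.choose 2 * qFact x⁻¹ n = qFact x n := by
  induction n with
  | zero => simp [qFact]
  | succ n ih =>
    rw [qFact_succ, qFact_succ, Nat.choose_succ_succ', Nat.choose_one_right, pow_add,
      ← ih, ← pow_mul_qInt_inv hx n]
    ring

lemma qInt_qv_ne_zero (n : ℕ) : qInt qv (n + 1) ≠ 0 := by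
  have h : qInt qv (n + 1) =
      algebraMap (Polynomial ℚ) Fq (∑ i ∈ range (n + 1), Polynomial.X ^ i) := by
    simp [qInt, qv, RatFunc.algebraMap_X]
  rw [h, map_ne_zero_iff _ (IsFractionRing.injective (Polynomial ℚ) Fq)]
  intro h0
  have h1 := congrArg (Polynomial.eval 1) h0
  simp only [Polynomial.eval_finsetSum, Polynomial.eval_pow, Polynomial.eval_X, one_pow,
    sum_const, card_range, nsmul_eq_mul, mul_one, Polynomial.eval_zero] at h1
  exact Nat.cast_ne_zero.mpr n.succ_ne_zero h1

end QAnalogues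

def qGaussSum (x t : Fq) (m : ℕ) : Fq :=
  ∑ p ∈ antidiagonal m, (-1) ^ p.2 * x ^ p.2.choose 2 * t ^ p.2 / (qFact x p.1 * qFact x p.2)

section QGaussSum

variable {x : Fq} (hx : ∀ n, qInt x (n + 1) ≠ 0)
include hx

lemma qInt_succ_mul_qGaussSum_succ (t : Fq) (m : ℕ) :
    qInt x (m + 1) * qGaussSum x t (m + 1) = (1 - t * x ^ m) * qGaussSum x t m := by
  have hF := qFact_ne_zero x hx
  set c : ℕ → Fq := fun j => (-1) ^ j * x ^ j.choose 2 * t ^ j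
  have hc : ∀ j, c (j + 1) = -(t * x ^ j) * c j := fun j => by
    simp only [c, Nat.choose_succ_succ', Nat.choose_one_right, pow_add, pow_succ]
    ring
  -- split `[i+j] = [i] + x^i [j]` and cancel one q-integer against a q-factorial in each part
  calc qInt x (m + 1) * qGaussSum x t (m + 1)
      = ∑ p ∈ antidiagonal (m + 1),
          c p.2 * qInt x (p.1 + p.2) / (qFact x p.1 * qFact x p.2) := by
        rw [qGaussSum, mul_sum]
        refine sum_congr rfl fun p hp => ?_
        rw [mem_antidiagonal.mp hp]
        ring
    _ = ∑ p ∈ antidiagonal (m + 1), c p.2 * qInt x p.1 / (qFact x p.1 * qFact x p.2)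
        + ∑ p ∈ antidiagonal (m + 1),
            c p.2 * x ^ p.1 * qInt x p.2 / (qFact x p.1 * qFact x p.2) := by
        rw [← sum_add_distrib]
        exact sum_congr rfl fun p _ => by rw [qInt_add]; ring
    _ = qGaussSum x t m + -(t * x ^ m) * qGaussSum x t m := by
        rw [Nat.sum_antidiagonal_succ, Nat.sum_antidiagonal_succ', qGaussSum,
          mul_sum]
        simp only [qInt, range_zero, sum_empty, mul_zero, zero_div, zero_add]
        congr 1
        · refine sum_congr rfl fun p _ => ?_
          rw [← qInt, qFact_succ]
          field_simp [hx p.1, hF p.1]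
          rfl
        · refine sum_congr rfl fun p hp => ?_
          rw [← qInt, qFact_succ, hc, ← mem_antidiagonal.mp hp, pow_add]
          field_simp [hx p.2, hF p.2]
          simp only [c]
          ring
    _ = (1 - t * x ^ m) * qGaussSum x t m := by ring

lemma qGaussSum_inv_eq_zero (hx0 : x ≠ 0) {m : ℕ} (hm : 2 ≤ m) :
    qGaussSum x x⁻¹ m = 0 := by
  induction m, hm using Nat.le_induction with
  | base =>
    have h := qInt_succ_mul_qGaussSum_succ hx x⁻¹ 1
    rw [pow_one, inv_mul_cancel₀ hx0, sub_self, zero_mul] at h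
    exact (mul_eq_zero.mp h).resolve_left (hx 1)
  | succ n _ ih =>
    have h := qInt_succ_mul_qGaussSum_succ hx x⁻¹ n
    rw [ih, mul_zero] at h
    exact (mul_eq_zero.mp h).resolve_left (hx n)

end QGaussSum

lemma qGaussSum_zero (x t : Fq) : qGaussSum x t 0 = 1 := by
  simp [qGaussSum, qFact]

lemma coeff_qsin_mul_add_coeff_qcos_mul (x y : Fq) (i j : ℕ) :
    coeff i (qsin x) * coeff j (qsin y) + coeff i (qcos x) * coeff j (qcos y) =
      if i % 2 = j % 2 then
        (-1) ^ (i / 2 + j / 2) * x ^ (i / 2) * y ^ (j / 2) / (qFact x i * qFact y j)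
      else 0 := by
  simp only [qsin, qcos, coeff_mk]
  rcases Nat.mod_two_eq_zero_or_one i with hi | hi <;>
    rcases Nat.mod_two_eq_zero_or_one j with hj | hj <;>
    simp [hi, hj, pow_add, div_mul_div_comm] <;> ring

lemma qsin_qcos_term_inv_eq (x : Fq) (hx : x ≠ 0) {i j : ℕ} (hij : i % 2 = j % 2) :
    (-1) ^ (i / 2 + j / 2) * x ^ (i / 2) * x⁻¹ ^ (j / 2) / (qFact x i * qFact x⁻¹ j) =
      (-1) ^ ((i + j) / 2) * x ^ ((i + j) / 2) *
        ((-1) ^ j * x ^ j.choose 2 * x⁻¹ ^ j / (qFact x i * qFact x j)) := by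
  rw [← pow_choose_two_mul_qFact_inv hx j]
  obtain ⟨a, b, r, hr, rfl, rfl⟩ : ∃ a b r, r < 2 ∧ i = 2 * a + r ∧ j = 2 * b + r :=
    ⟨i / 2, j / 2, j % 2, Nat.mod_lt _ two_pos, by omega, by omega⟩
  have hi : (2 * a + r) / 2 = a := by omega
  have hj : (2 * b + r) / 2 = b := by omega
  have hN : (2 * a + r + (2 * b + r)) / 2 = a + b + r := by omega
  rw [hi, hj, hN, pow_add (-1 : Fq) (2 * b), pow_mul, neg_one_sq, one_pow, one_mul]
  simp only [inv_pow]
  interval_cases r <;> field_simp <;> ring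

lemma coeff_qsin_mul_qsin_inv_add_qcos_mul_qcos_inv (x : Fq) (hx : x ≠ 0) (m : ℕ) :
    coeff m (qsin x * qsin x⁻¹ + qcos x * qcos x⁻¹) =
      if m % 2 = 0 then (-1) ^ (m / 2) * x ^ (m / 2) * qGaussSum x x⁻¹ m else 0 := by
  rw [map_add, coeff_mul, coeff_mul, ← sum_add_distrib]
  split_ifs with hm
  · rw [qGaussSum, mul_sum]
    refine sum_congr rfl fun p hp => ?_
    have hp : p.1 + p.2 = m := mem_antidiagonal.mp hp
    rw [coeff_qsin_mul_add_coeff_qcos_mul, if_pos (by omega),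
      qsin_qcos_term_inv_eq x hx (by omega), hp]
  · refine sum_eq_zero fun p hp => ?_
    have hp : p.1 + p.2 = m := mem_antidiagonal.mp hp
    rw [coeff_qsin_mul_add_coeff_qcos_mul, if_neg (by omega)]

theorem q_sine_cosine_pair_0101 :
    qsin qv * qsin qv⁻¹ + qcos qv * qcos qv⁻¹ = 1 := by
  have hq : qv ≠ 0 := RatFunc.X_ne_zero
  ext m
  rw [coeff_qsin_mul_qsin_inv_add_qcos_mul_qcos_inv qv hq, coeff_one]
  rcases m with _ | _ | m
  · simp [qGaussSum_zero]
  · simp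
  · rw [qGaussSum_inv_eq_zero qInt_qv_ne_zero hq (by omega), mul_zero, ite_self, if_neg (by omega)]
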